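/- arXiv:2205.08795 — 2 statements merged into one kernel-verified Lean document; each statement's English description precedes it below -/
import Mathlib

section
/- For every prime number p and every integer k ≥ 1, the group-annihilator graph Γ(ℤ/p^kℤ) is a threshold graph. -/
/-- The `a`-annihilator of the abelian group `G` (viewed as a `ℤ`-module):
`[a : G] = {x ∈ ℤ : x•G ⊆ ℤ•a}`. -/
def annIdeal (G : Type*) [AddCommGroup G] (a : G) : Set ℤ :=
  {x : ℤ | ∀ g : G, ∃ m : ℤ, x • g = m • a}

/-- The group-annihilator graph `Γ(G)`: vertices are the elements of `G`, and distinct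
`a`, `b` are adjacent iff `[a : G]·[b : G]·G = {0}`. -/
def grpAnnGraph (G : Type*) [AddCommGroup G] : SimpleGraph G where
  Adj a b := a ≠ b ∧ ∀ x ∈ annIdeal G a, ∀ y ∈ annIdeal G b, ∀ g : G, (x * y) • g = 0
  symm := ⟨by
    rintro a b ⟨hne, h⟩
    refine ⟨hne.symm, fun y hy x hx g => ?_⟩
    rw [mul_comm]
    exact h x hx y hy g⟩
  loopless := ⟨fun a h => h.1 rfl⟩

/-- A simple graph on a (necessarily finite) vertex type is a threshold graph if its
vertices admit an enumeration `v_1, …, v_n` such that each `v_i` is adjacent either to all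
of the previous vertices or to none of them. -/
def IsThreshold {V : Type*} (Γ : SimpleGraph V) : Prop :=
  ∃ e : Fin (Nat.card V) ≃ V,
    ∀ i : Fin (Nat.card V),
      (∀ j, j < i → Γ.Adj (e j) (e i)) ∨ (∀ j, j < i → ¬ Γ.Adj (e j) (e i))

/-!
Since `ℤ/p^kℤ` is cyclic, `[a : G]` consists of the integers that are multiples of `a` in the ring
`ℤ/p^kℤ`, so distinct `a`, `b` are adjacent iff `a * b = 0`, i.e. iff `v a + v b ≥ k` for the
`p`-adic valuation `v` (with `v 0 = k`). Any graph whose adjacency is `w a + w b ≥ t` is threshold: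
list the vertices by increasing `|2 w - t|`, ties by increasing `w`; then a vertex `b` is adjacent
to all earlier vertices when `2 w b ≥ t` and to none of them otherwise.
-/

theorem Finite.exists_equiv_fin_monotone {V α : Type*} [Finite V] [LinearOrder α] (f : V → α) :
    ∃ e : Fin (Nat.card V) ≃ V, Monotone (f ∘ e) := by
  let e₀ : Fin (Nat.card V) ≃ V := (Finite.equivFin V).symm
  exact ⟨(Tuple.sort (f ∘ e₀)).trans e₀, Tuple.monotone_sort (f ∘ e₀)⟩

theorem isThreshold_of_monotone_key {V α : Type*} [Finite V] [LinearOrder α] (Γ : SimpleGraph V)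
    (key : V → α) (P : V → Prop) (h : ∀ a b, a ≠ b → key a ≤ key b → (Γ.Adj a b ↔ P b)) :
    IsThreshold Γ := by
  obtain ⟨e, he⟩ := Finite.exists_equiv_fin_monotone key
  refine ⟨e, fun i => ?_⟩
  have hadj : ∀ j < i, Γ.Adj (e j) (e i) ↔ P (e i) := fun j hj =>
    h _ _ (e.injective.ne hj.ne) (he hj.le)
  by_cases hP : P (e i)
  · exact .inl fun j hj => (hadj j hj).2 hP
  · exact .inr fun j hj => mt (hadj j hj).1 hP

theorem le_add_iff_le_two_mul_of_toLex_le {wa wb t : ℤ}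
    (h : toLex (|2 * wa - t|, wa) ≤ toLex (|2 * wb - t|, wb)) : t ≤ wa + wb ↔ t ≤ 2 * wb := by
  rw [Prod.Lex.toLex_le_toLex] at h
  cases abs_cases (2 * wa - t) <;> cases abs_cases (2 * wb - t) <;> omega

theorem isThreshold_of_adj_iff_le_add {V : Type*} [Finite V] (Γ : SimpleGraph V) (w : V → ℤ)
    (t : ℤ) (h : ∀ a b, Γ.Adj a b ↔ a ≠ b ∧ t ≤ w a + w b) : IsThreshold Γ :=
  isThreshold_of_monotone_key Γ (fun a => toLex (|2 * w a - t|, w a)) (fun b => t ≤ 2 * w b)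
    fun a b hab hkey => by rw [h, ← le_add_iff_le_two_mul_of_toLex_le hkey]; exact and_iff_right hab

theorem ZMod.intCast_mem_annIdeal_iff {n : ℕ} {a : ZMod n} {x : ℤ} :
    x ∈ annIdeal (ZMod n) a ↔ ∃ c : ZMod n, (x : ZMod n) = c * a := by
  constructor
  · intro h
    obtain ⟨m, hm⟩ := h 1
    exact ⟨m, by simpa [zsmul_eq_mul] using hm⟩
  · rintro ⟨c, hc⟩ g
    obtain ⟨m, hm⟩ := ZMod.intCast_surjective (c * g)
    refine ⟨m, ?_⟩
    rw [zsmul_eq_mul, zsmul_eq_mul, hc, hm]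
    ring

theorem ZMod.grpAnnGraph_adj_iff {n : ℕ} {a b : ZMod n} :
    (grpAnnGraph (ZMod n)).Adj a b ↔ a ≠ b ∧ a * b = 0 := by
  refine and_congr_right fun _ => ⟨fun h => ?_, fun hab x hx y hy g => ?_⟩
  · obtain ⟨x, rfl⟩ := ZMod.intCast_surjective a
    obtain ⟨y, rfl⟩ := ZMod.intCast_surjective b
    have hx : x ∈ annIdeal (ZMod n) x := intCast_mem_annIdeal_iff.2 ⟨1, (one_mul _).symm⟩
    have hy : y ∈ annIdeal (ZMod n) y := intCast_mem_annIdeal_iff.2 ⟨1, (one_mul _).symm⟩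
    simpa using h x hx y hy 1
  · obtain ⟨c, hc⟩ := intCast_mem_annIdeal_iff.1 hx
    obtain ⟨d, hd⟩ := intCast_mem_annIdeal_iff.1 hy
    rw [zsmul_eq_mul, Int.cast_mul, hc, hd]
    linear_combination (c * d * g) * hab

def ZMod.padicValPrimePow (p k : ℕ) (a : ZMod (p ^ k)) : ℕ :=
  if a = 0 then k else padicValNat p a.val

theorem ZMod.mul_eq_zero_iff_le_padicValPrimePow_add {p k : ℕ} (hp : p.Prime)
    {a b : ZMod (p ^ k)} : a * b = 0 ↔ k ≤ padicValPrimePow p k a + padicValPrimePow p k b := by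
  by_cases ha : a = 0
  · simp [padicValPrimePow, ha]
  by_cases hb : b = 0
  · simp [padicValPrimePow, hb]
  have : NeZero (p ^ k) := ⟨pow_ne_zero k hp.ne_zero⟩
  have : Fact p.Prime := ⟨hp⟩
  have hva : a.val ≠ 0 := (val_eq_zero a).not.2 ha
  have hvb : b.val ≠ 0 := (val_eq_zero b).not.2 hb
  calc a * b = 0 ↔ ((a.val * b.val : ℕ) : ZMod (p ^ k)) = 0 := by
        rw [Nat.cast_mul, natCast_zmod_val, natCast_zmod_val]
    _ ↔ p ^ k ∣ a.val * b.val := natCast_eq_zero_iff _ _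
    _ ↔ k ≤ padicValNat p (a.val * b.val) := padicValNat_dvd_iff_le (mul_ne_zero hva hvb)
    _ ↔ k ≤ padicValPrimePow p k a + padicValPrimePow p k b := by
        rw [padicValNat.mul hva hvb, padicValPrimePow, padicValPrimePow, if_neg ha, if_neg hb]

theorem grpAnnGraph_isThreshold_general (p k : ℕ) (hp : p.Prime) :
    IsThreshold (grpAnnGraph (ZMod (p ^ k))) := by
  have : NeZero (p ^ k) := ⟨pow_ne_zero k hp.ne_zero⟩
  refine isThreshold_of_adj_iff_le_add _ (fun a => ZMod.padicValPrimePow p k a) k fun a b => ?_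
  rw [ZMod.grpAnnGraph_adj_iff, ZMod.mul_eq_zero_iff_le_padicValPrimePow_add hp]
  norm_cast

/-- For every prime `p` and `k ≥ 1`, the group-annihilator graph
`Γ(ℤ/p^kℤ)` is a threshold graph. -/
theorem grpAnnGraph_isThreshold (p k : ℕ) (hp : p.Prime) (hk : 1 ≤ k) :
    IsThreshold (grpAnnGraph (ZMod (p ^ k))) :=
  grpAnnGraph_isThreshold_general p k hp
end

section
/- Let p be any prime number and k ≥ 1. Every eigenvalue of the Laplacian matrix of the group-annihilator graph Γ(ℤ/p^kℤ) belongs to the set {0} ∪ {p^i : 0 ≤ i ≤ k}; moreover, 0 and p^k are eigenvalues of this Laplacian matrix. -/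
open Classical in
/-- The Laplacian matrix `D - A` of a finite simple graph: diagonal entries are the
vertex degrees, off-diagonal entries are `-1` for adjacent pairs and `0` otherwise. -/
noncomputable def lapMat {V : Type*} [Fintype V] [DecidableEq V] (Γ : SimpleGraph V) :
    Matrix V V ℝ :=
  Matrix.of fun a b =>
    if a = b then ((Γ.neighborSet a).ncard : ℝ) else if Γ.Adj a b then -1 else 0

/-!
In `ZMod n` the annihilator ideal `[a : G]` consists of the integers whose image is a multiple
of `a`, so `a` and `b` are adjacent in `Γ(ZMod n)` exactly when `a ≠ b` and `a * b = 0`.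
For `n = p ^ k` let `d a` be the `p`-adic valuation of `a` (with `d 0 = k`); then `a * b = 0`
iff `k ≤ d a + d b`. Hence an eigenvector `v` for `μ` satisfies
`(#ann a - μ) * v a = σ (k - d a)`, where `σ t` is the sum of `v` over `{d ≥ t}` and `#ann a`
divides `p ^ k`. If `μ` is neither `0` nor a power of `p`, then `σ 0 = 0` (the Laplacian has
zero column sums) and `σ (k + 1) = 0`, and peeling off the levels `d = k - m` and `d = m`
alternately shows that `σ`, hence `v`, vanishes. Finally `0` is an eigenvalue (constant vector),
and so is `p ^ k = #V`, because `0` is adjacent to every other vertex.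
-/

open Finset Matrix

theorem Matrix.mem_spectrum_iff_exists_mulVec_eq_smul {K n : Type*} [Field K] [Fintype n]
    [DecidableEq n] (A : Matrix n n K) (μ : K) :
    μ ∈ spectrum K A ↔ ∃ v ≠ 0, A *ᵥ v = μ • v := by
  rw [← Matrix.spectrum_toLin', ← Module.End.hasEigenvalue_iff_mem_spectrum]
  constructor
  · intro h
    obtain ⟨v, hv, hv0⟩ := h.exists_hasEigenvector
    exact ⟨v, hv0, by simpa using Module.End.mem_eigenspace_iff.1 hv⟩
  · rintro ⟨v, hv0, hv⟩
    exact Module.End.hasEigenvalue_of_hasEigenvector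
      ⟨Module.End.mem_eigenspace_iff.2 (by simpa using hv), hv0⟩

namespace SimpleGraph

variable {V : Type*} [Fintype V] [DecidableEq V] (Γ : SimpleGraph V) [DecidableRel Γ.Adj]

theorem lapMat_eq_lapMatrix : lapMat Γ = Γ.lapMatrix ℝ := by
  ext a b
  by_cases hab : a = b
  · subst hab
    simp [lapMat, lapMatrix, degMatrix, ← card_neighborFinset_eq_degree,
      Set.ncard_eq_toFinset_card', neighborFinset_eq_filter]
  · simp only [lapMat, lapMatrix, degMatrix, of_apply, Matrix.sub_apply, adjMatrix_apply,
      if_neg hab, diagonal_apply_ne _ hab, zero_sub]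
    split_ifs <;> simp

theorem lapMatrix_mulVec_apply_of_adj_iff {R : Type*} [Ring R] {a : V} {s : Finset V}
    (hs : ∀ b, Γ.Adj a b ↔ b ≠ a ∧ b ∈ s) (v : V → R) :
    (Γ.lapMatrix R *ᵥ v) a = #s * v a - ∑ b ∈ s, v b := by
  have hN : Γ.neighborFinset a = s.erase a := by
    ext b
    rw [mem_neighborFinset, hs, mem_erase]
  rw [lapMatrix_mulVec_apply, ← card_neighborFinset_eq_degree, hN]
  by_cases ha : a ∈ s
  · rw [card_erase_of_mem ha, sum_erase_eq_sub ha, Nat.cast_sub (card_pos.2 ⟨a, ha⟩)]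
    rw [Nat.cast_one, sub_mul, one_mul]
    abel
  · rw [erase_eq_of_notMem ha]

theorem sum_lapMatrix_mulVec {R : Type*} [CommRing R] (v : V → R) :
    ∑ a, (Γ.lapMatrix R *ᵥ v) a = 0 := by
  rw [← one_dotProduct, dotProduct_mulVec, ← mulVec_transpose, (isSymm_lapMatrix R Γ).eq]
  change (Γ.lapMatrix R *ᵥ fun _ ↦ 1) ⬝ᵥ v = 0
  rw [lapMatrix_mulVec_const_eq_zero, zero_dotProduct]

theorem zero_mem_spectrum_lapMatrix {K : Type*} [Field K] [Nonempty V] :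
    (0 : K) ∈ spectrum K (Γ.lapMatrix K) := by
  rw [Matrix.mem_spectrum_iff_exists_mulVec_eq_smul]
  exact ⟨fun _ ↦ 1, Function.ne_iff.2 ⟨Classical.arbitrary V, one_ne_zero⟩,
    by rw [lapMatrix_mulVec_const_eq_zero, zero_smul]⟩

theorem card_mem_spectrum_lapMatrix_of_forall_adj {K : Type*} [Field K] [CharZero K] {u : V}
    (hu : ∀ b ≠ u, Γ.Adj u b) (hV : 1 < Fintype.card V) :
    (Fintype.card V : K) ∈ spectrum K (Γ.lapMatrix K) := by
  set w : V → K := (Fintype.card V : K) • Pi.single u 1 - fun _ ↦ 1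
  have hN : Γ.neighborFinset u = univ.erase u := by
    ext b
    rw [mem_neighborFinset, mem_erase]
    exact ⟨fun h ↦ ⟨h.ne', mem_univ b⟩, fun h ↦ hu b h.1⟩
  have hLu : Γ.lapMatrix K *ᵥ Pi.single u 1 = w := by
    ext a
    rw [lapMatrix_mulVec_apply, sum_pi_single']
    by_cases ha : a = u
    · subst ha
      simp [w, ← card_neighborFinset_eq_degree, hN, Nat.cast_sub hV.le]
    · simp [w, ha, (hu a ha).symm]
  rw [Matrix.mem_spectrum_iff_exists_mulVec_eq_smul]
  refine ⟨w, Function.ne_iff.2 ⟨u, ?_⟩, ?_⟩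
  · simp [w, sub_eq_zero]
    exact_mod_cast hV.ne'
  · rw [mulVec_sub, mulVec_smul, hLu, lapMatrix_mulVec_const_eq_zero, sub_zero]

end SimpleGraph

theorem eq_zero_of_forall_sub_mul_eq_sum_threshold {V K : Type*} [Fintype V] [Field K] {k : ℕ}
    (d : V → ℕ) (hd : ∀ a, d a ≤ k) {c : V → K} {μ : K} (hc : ∀ a, c a ≠ μ) {v : V → K}
    (hsum : ∑ a, v a = 0) (hv : ∀ a, (c a - μ) * v a = ∑ b with k ≤ d a + d b, v b) :
    v = 0 := by
  set σ : ℕ → K := fun t ↦ ∑ b with t ≤ d b, v b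
  have hvσ : ∀ a, (c a - μ) * v a = σ (k - d a) := fun a ↦ by
    rw [hv]
    exact sum_congr (filter_congr fun b _ ↦ by omega) fun _ _ ↦ rfl
  have hzero : ∀ a, σ (k - d a) = 0 → v a = 0 := fun a h ↦
    (mul_eq_zero.1 ((hvσ a).trans h)).resolve_left (sub_ne_zero.2 (hc a))
  have hstep : ∀ t, σ (k - t) = 0 → σ t = σ (t + 1) := fun t h ↦
    (sum_subset (fun b ↦ by simp only [mem_filter, mem_univ, true_and]; omega) fun b hb hb' ↦
      hzero b (by
        simp only [mem_filter, mem_univ, true_and] at hb hb'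
        rwa [show d b = t by omega])).symm
  have hpair : ∀ m ≤ k + 1, σ m = 0 ∧ σ (k + 1 - m) = 0 := by
    intro m
    induction m with
    | zero =>
      refine fun _ ↦ ⟨by simpa [σ] using hsum, ?_⟩
      exact sum_eq_zero fun b hb ↦ by have := hd b; simp only [mem_filter] at hb; omega
    | succ m ih =>
      intro hm
      obtain ⟨hm₁, hm₂⟩ := ih (by omega)
      have hkm : σ (k - m) = 0 := by
        rw [hstep (k - m) (by rwa [Nat.sub_sub_self (by omega)]), ← hm₂]
        congr 1
        omega
      exact ⟨(hstep m hkm).symm.trans hm₁, by rwa [Nat.add_sub_add_right]⟩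
  funext a
  exact hzero a (hpair (k - d a) (by omega)).1

namespace ZMod

variable {n : ℕ}

theorem mem_annIdeal_iff (a : ZMod n) (x : ℤ) : x ∈ annIdeal (ZMod n) a ↔ a ∣ (x : ZMod n) := by
  constructor
  · intro h
    obtain ⟨m, hm⟩ := h 1
    rw [zsmul_eq_mul, zsmul_eq_mul, mul_one] at hm
    exact ⟨m, by rw [hm, mul_comm]⟩
  · rintro ⟨c, hc⟩ g
    obtain ⟨m, hm⟩ := intCast_surjective (c * g)
    exact ⟨m, by rw [zsmul_eq_mul, zsmul_eq_mul, hc, hm]; ring⟩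

theorem grpAnnGraph_adj_iff_s14 (a b : ZMod n) :
    (grpAnnGraph (ZMod n)).Adj a b ↔ a ≠ b ∧ a * b = 0 := by
  refine and_congr_right fun _ ↦ ⟨fun h ↦ ?_, fun hab x hx y hy g ↦ ?_⟩
  · obtain ⟨x, rfl⟩ := intCast_surjective a
    obtain ⟨y, rfl⟩ := intCast_surjective b
    simpa using h x ((mem_annIdeal_iff _ x).2 dvd_rfl) y ((mem_annIdeal_iff _ y).2 dvd_rfl) 1
  · obtain ⟨c, hc⟩ := (mem_annIdeal_iff a x).1 hx
    obtain ⟨c', hc'⟩ := (mem_annIdeal_iff b y).1 hy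
    rw [zsmul_eq_mul, Int.cast_mul, hc, hc']
    linear_combination (c * c' * g) * hab

theorem card_filter_mul_eq_zero_dvd [NeZero n] (a : ZMod n) : #{b | a * b = 0} ∣ n := by
  have := AddSubgroup.card_addSubgroup_dvd_card (AddMonoidHom.mulLeft a).ker
  rw [Nat.card_zmod] at this
  convert this using 1
  rw [← Fintype.card_subtype, ← Nat.card_eq_fintype_card]
  rfl

def padicVal (p k : ℕ) (a : ZMod (p ^ k)) : ℕ := if a = 0 then k else padicValNat p a.val

variable {p k : ℕ} [Fact p.Prime]

theorem padicVal_le (a : ZMod (p ^ k)) : padicVal p k a ≤ k := by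
  unfold padicVal
  split_ifs with ha
  · rfl
  · have hval := (val_ne_zero a).2 ha
    have : p ^ padicValNat p a.val < p ^ k :=
      (Nat.le_of_dvd (Nat.pos_of_ne_zero hval) pow_padicValNat_dvd).trans_lt (val_lt a)
    exact ((Nat.pow_lt_pow_iff_right (Fact.out : p.Prime).one_lt).1 this).le

theorem mul_eq_zero_iff_le_padicVal_add (a b : ZMod (p ^ k)) :
    a * b = 0 ↔ k ≤ padicVal p k a + padicVal p k b := by
  by_cases ha : a = 0
  · simp [padicVal, ha]
  by_cases hb : b = 0
  · simp [padicVal, hb]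
  have hval := (val_ne_zero a).2 ha
  have hval' := (val_ne_zero b).2 hb
  rw [padicVal, padicVal, if_neg ha, if_neg hb, ← padicValNat.mul hval hval',
    ← padicValNat_dvd_iff_le (mul_ne_zero hval hval'), ← natCast_eq_zero_iff, Nat.cast_mul,
    natCast_zmod_val, natCast_zmod_val]

open SimpleGraph in
theorem eq_zero_or_eq_pow_of_mem_spectrum_lapMatrix_grpAnnGraph
    [DecidableRel (grpAnnGraph (ZMod (p ^ k))).Adj] {μ : ℝ}
    (hμ : μ ∈ spectrum ℝ ((grpAnnGraph (ZMod (p ^ k))).lapMatrix ℝ)) :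
    μ = 0 ∨ ∃ i ≤ k, μ = (p : ℝ) ^ i := by
  by_contra! hμ'
  obtain ⟨hμ0, hμp⟩ := hμ'
  obtain ⟨v, hv0, hv⟩ := (Matrix.mem_spectrum_iff_exists_mulVec_eq_smul _ μ).1 hμ
  set ann : ZMod (p ^ k) → Finset (ZMod (p ^ k)) := fun a ↦
    {b | k ≤ padicVal p k a + padicVal p k b}
  have hann : ∀ a, ann a = ({b | a * b = 0} : Finset _) := fun a ↦
    filter_congr fun b _ ↦ (mul_eq_zero_iff_le_padicVal_add a b).symm
  have hrow : ∀ a,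
      ((grpAnnGraph _).lapMatrix ℝ *ᵥ v) a = #(ann a) * v a - ∑ b ∈ ann a, v b := fun a ↦
    lapMatrix_mulVec_apply_of_adj_iff _ (fun b ↦ by
      rw [grpAnnGraph_adj_iff_s14, hann, mem_filter, ne_comm]; simp) v
  refine hv0 (eq_zero_of_forall_sub_mul_eq_sum_threshold (padicVal p k) padicVal_le
    (c := fun a ↦ (#(ann a) : ℝ)) (μ := μ) (fun a ↦ ?_) ?_ (fun a ↦ ?_))
  · obtain ⟨i, hi, hcard⟩ :=
      (Nat.dvd_prime_pow Fact.out).1 (hann a ▸ card_filter_mul_eq_zero_dvd a)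
    rw [hcard]
    exact_mod_cast (hμp i hi).symm
  · have hL := sum_lapMatrix_mulVec (grpAnnGraph (ZMod (p ^ k))) v
    rw [hv] at hL
    simpa [← mul_sum, hμ0] using hL
  · have := (hrow a).symm.trans (congrFun hv a)
    rw [Pi.smul_apply, smul_eq_mul] at this
    linear_combination this

end ZMod

/-- For any prime `p` and `k ≥ 1`, every Laplacian eigenvalue of
`Γ(ℤ/p^kℤ)` lies in `{0} ∪ {p^i : 0 ≤ i ≤ k}`, and moreover `0` and `p^k` are
Laplacian eigenvalues. -/
theorem lap_spectrum_grpAnnGraph_subset (p k : ℕ) [Fact p.Prime] (hk : 1 ≤ k) :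
    (∀ μ : ℝ, μ ∈ spectrum ℝ (lapMat (grpAnnGraph (ZMod (p ^ k)))) →
        μ = 0 ∨ ∃ i ≤ k, μ = (p : ℝ) ^ i) ∧
    (0 : ℝ) ∈ spectrum ℝ (lapMat (grpAnnGraph (ZMod (p ^ k)))) ∧
    ((p : ℝ) ^ k) ∈ spectrum ℝ (lapMat (grpAnnGraph (ZMod (p ^ k)))) := by
  classical
  rw [SimpleGraph.lapMat_eq_lapMatrix]
  refine ⟨fun μ ↦ ZMod.eq_zero_or_eq_pow_of_mem_spectrum_lapMatrix_grpAnnGraph,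
    SimpleGraph.zero_mem_spectrum_lapMatrix _, ?_⟩
  have hdom : ∀ b ≠ 0, (grpAnnGraph (ZMod (p ^ k))).Adj 0 b := fun b hb ↦
    (ZMod.grpAnnGraph_adj_iff_s14 0 b).2 ⟨hb.symm, zero_mul b⟩
  have hcard : 1 < Fintype.card (ZMod (p ^ k)) := by
    rw [ZMod.card]
    exact Nat.one_lt_pow (by omega) (Fact.out : p.Prime).one_lt
  simpa using SimpleGraph.card_mem_spectrum_lapMatrix_of_forall_adj (K := ℝ) _ hdom hcard
end
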